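/- The function τ is concave on the interval (1, ∞). -/

import Mathlib

open MeasureTheory Filter Set Metric Topology

noncomputable section

/-- The `i`-th largest singular value (0-indexed) of a real `d × d` matrix:
the positive square roots of the eigenvalues of `Aᵀ * A`, in decreasing order. -/
def singVal (d : ℕ) (A : Matrix (Fin d) (Fin d) ℝ) (i : Fin d) : ℝ :=
  Real.sqrt
    (((Matrix.isHermitian_conjTranspose_mul_self A).eigenvalues ∘
      ⇑(Tuple.sort (Matrix.isHermitian_conjTranspose_mul_self A).eigenvalues)) i.rev)

/-- `ℕ`-indexed version of the singular values (junk value `0` out of range). -/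
def svNat (d : ℕ) (A : Matrix (Fin d) (Fin d) ℝ) (i : ℕ) : ℝ :=
  if h : i < d then singVal d A ⟨i, h⟩ else 0

/-- Falconer's singular value function `φ^s(A)`:  for `k - 1 < s ≤ k ≤ d` it equals
`α₁ ⋯ α_{k-1} · α_k ^ (s - k + 1)`, for `s ≥ d` it equals `(α₁ ⋯ α_d) ^ (s/d)`, and
`φ^0(A) = 1`. -/
def svf (d : ℕ) (A : Matrix (Fin d) (Fin d) ℝ) (s : ℝ) : ℝ :=
  if s = 0 then 1
  else if s ≤ d then
    (∏ i ∈ Finset.range (⌈s⌉₊ - 1), svNat d A i) *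
      svNat d A (⌈s⌉₊ - 1) ^ (s - ((⌈s⌉₊ - 1 : ℕ) : ℝ))
  else (∏ i ∈ Finset.range d, svNat d A i) ^ (s / d)

/-- `T_I = T_{i₁} ⬝ ⋯ ⬝ T_{i_k}` for a word `I = i₁ … i_k`. -/
def wordT {d m : ℕ} (T : Fin m → Matrix (Fin d) (Fin d) ℝ) (I : List (Fin m)) :
    Matrix (Fin d) (Fin d) ℝ := (I.map T).prod

/-- `p_I = p_{i₁} ⋯ p_{i_k}` for a word `I = i₁ … i_k`. -/
def wordP {m : ℕ} (p : Fin m → ℝ) (I : List (Fin m)) : ℝ := (I.map p).prod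

/-- The word `x|n = x₁ … x_n` consisting of the first `n` letters of `x ∈ Σ`. -/
def wordOf {m : ℕ} (x : ℕ → Fin m) (n : ℕ) : List (Fin m) := (List.range n).map x

/-- Operator norm of a matrix acting on Euclidean space. -/
def matOpNorm (d : ℕ) (A : Matrix (Fin d) (Fin d) ℝ) : ℝ :=
  ‖LinearMap.toContinuousLinearMap (Matrix.toEuclideanLin A)‖

/-- Convergence of the series `∑_{k ≥ 1} ∑_{I ∈ Σ_k} φ^s(T_I)^{1-q} p_I^q`. -/
def DSeriesConv (d m : ℕ) (T : Fin m → Matrix (Fin d) (Fin d) ℝ) (p : Fin m → ℝ)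
    (q s : ℝ) : Prop :=
  Summable fun I : {I : List (Fin m) // I ≠ []} =>
    svf d (wordT T I.1) s ^ (1 - q) * wordP p I.1 ^ q

/-- Falconer's function `D(q)`. -/
def Dfun (d m : ℕ) (T : Fin m → Matrix (Fin d) (Fin d) ℝ) (p : Fin m → ℝ) (q : ℝ) : ℝ :=
  if q < 1 then (q - 1) * sInf {s : ℝ | 0 ≤ s ∧ DSeriesConv d m T p q s}
  else if q = 1 then 0
  else (q - 1) * sSup {s : ℝ | 0 ≤ s ∧ DSeriesConv d m T p q s}

/-- The function `τ(q) = (q-1) · min (D(q)/(q-1), d)` (with `τ(1) = 0`). -/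
def taufun (d m : ℕ) (T : Fin m → Matrix (Fin d) (Fin d) ℝ) (p : Fin m → ℝ) (q : ℝ) : ℝ :=
  if q = 1 then 0 else (q - 1) * min (Dfun d m T p q / (q - 1)) d

/-- The affine map `S = T + a` on `ℝ^d`. -/
def affMap {d : ℕ} (A : Matrix (Fin d) (Fin d) ℝ) (a : EuclideanSpace ℝ (Fin d)) :
    EuclideanSpace ℝ (Fin d) → EuclideanSpace ℝ (Fin d) :=
  fun x => Matrix.toEuclideanLin A x + a

/-- The composition `S_{i₁} ∘ ⋯ ∘ S_{i_k}` for a word `I = i₁ … i_k`. -/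
def affWord {d m : ℕ} (T : Fin m → Matrix (Fin d) (Fin d) ℝ)
    (a : Fin m → EuclideanSpace ℝ (Fin d)) (I : List (Fin m)) :
    EuclideanSpace ℝ (Fin d) → EuclideanSpace ℝ (Fin d) :=
  I.foldr (fun i g => affMap (T i) (a i) ∘ g) id

/-- `μ` is the self-affine measure for the IFS `{T_i + a_i}` and weights `(p_i)`:
the (unique) Borel probability measure with `μ = ∑ p_i · μ ∘ S_i⁻¹`. -/
def IsSelfAffineMeasure {d m : ℕ} (T : Fin m → Matrix (Fin d) (Fin d) ℝ)
    (p : Fin m → ℝ) (a : Fin m → EuclideanSpace ℝ (Fin d))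
    (μ : Measure (EuclideanSpace ℝ (Fin d))) : Prop :=
  IsProbabilityMeasure μ ∧
    μ = ∑ i, ENNReal.ofReal (p i) • μ.map (affMap (T i) (a i))

/-- The coding map `π^a(x) = lim_n S_{x₁} ∘ ⋯ ∘ S_{x_n}(0)`. -/
def codingMap {d m : ℕ} (T : Fin m → Matrix (Fin d) (Fin d) ℝ)
    (a : Fin m → EuclideanSpace ℝ (Fin d)) (x : ℕ → Fin m) : EuclideanSpace ℝ (Fin d) :=
  limUnder atTop fun n => affWord T a (wordOf x n) 0

/-- The left shift on `Σ = {1, …, m}^ℕ`. -/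
def shiftMap {m : ℕ} (x : ℕ → Fin m) : ℕ → Fin m := fun n => x (n + 1)

/-- The topological support of a measure on `ℝ^d`. -/
def msupp {d : ℕ} (ξ : Measure (EuclideanSpace ℝ (Fin d))) : Set (EuclideanSpace ℝ (Fin d)) :=
  {x | ∀ r > (0 : ℝ), 0 < ξ (ball x r)}

/-- `sup ∑_j ξ(B_r(x_j))^q` over families of disjoint balls of radius `r` centered
in the support of `ξ`. -/
def packSum {d : ℕ} (ξ : Measure (EuclideanSpace ℝ (Fin d))) (q r : ℝ) : ℝ :=
  sSup {y : ℝ | ∃ t : Finset (EuclideanSpace ℝ (Fin d)),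
    (∀ x ∈ t, x ∈ msupp ξ) ∧
    ((t : Set (EuclideanSpace ℝ (Fin d))).Pairwise fun x x' =>
      Disjoint (closedBall x r) (closedBall x' r)) ∧
    y = ∑ x ∈ t, (ξ (closedBall x r)).toReal ^ q}

/-- The `L^q`-spectrum `τ(ξ, q)`. -/
def LqSpec {d : ℕ} (ξ : Measure (EuclideanSpace ℝ (Fin d))) (q : ℝ) : ℝ :=
  liminf (fun r => Real.log (packSum ξ q r) / Real.log r) (𝓝[>] (0 : ℝ))

/-- The lower local dimension `d̲(ξ, z)`. -/
def lowerLocDim {d : ℕ} (ξ : Measure (EuclideanSpace ℝ (Fin d)))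
    (z : EuclideanSpace ℝ (Fin d)) : ℝ :=
  liminf (fun r => Real.log (ξ (closedBall z r)).toReal / Real.log r) (𝓝[>] (0 : ℝ))

/-- The level set `E(ξ, α)` of points where the local dimension exists and equals `α`. -/
def limLevelSet {d : ℕ} (ξ : Measure (EuclideanSpace ℝ (Fin d))) (α : ℝ) :
    Set (EuclideanSpace ℝ (Fin d)) :=
  {z | Tendsto (fun r => Real.log (ξ (closedBall z r)).toReal / Real.log r)
    (𝓝[>] (0 : ℝ)) (𝓝 α)}

/-- The level set `E̲(ξ, α)` of points where the lower local dimension equals `α`. -/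
def liminfLevelSet {d : ℕ} (ξ : Measure (EuclideanSpace ℝ (Fin d))) (α : ℝ) :
    Set (EuclideanSpace ℝ (Fin d)) :=
  {z | lowerLocDim ξ z = α}

/-- The composition `S_{i₁} ∘ ⋯ ∘ S_{i_k}` for a general IFS `S` on `ℝ^d`. -/
def compWord {d m : ℕ} (S : Fin m → EuclideanSpace ℝ (Fin d) → EuclideanSpace ℝ (Fin d))
    (I : List (Fin m)) : EuclideanSpace ℝ (Fin d) → EuclideanSpace ℝ (Fin d) :=
  I.foldr (fun i g => S i ∘ g) id

/-- The coding map of a general IFS: `π(x) = lim_n S_{x₁} ∘ ⋯ ∘ S_{x_n}(0)`. -/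
def codingMapGen {d m : ℕ} (S : Fin m → EuclideanSpace ℝ (Fin d) → EuclideanSpace ℝ (Fin d))
    (x : ℕ → Fin m) : EuclideanSpace ℝ (Fin d) :=
  limUnder atTop fun n => compWord S (wordOf x n) 0

/-- The rectangle in `ℝ^d` with edges parallel to the axes, center `c` and semi-axes `a`. -/
def axisRect {d : ℕ} (c a : Fin d → ℝ) : Set (Fin d → ℝ) := {y | ∀ i, |y i - c i| ≤ a i}

/-- The cube in `ℝ^d` with center `c` and semi-side `r`. -/
def cube {d : ℕ} (c : Fin d → ℝ) (r : ℝ) : Set (Fin d → ℝ) := {y | ∀ i, |y i - c i| ≤ r}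

end

noncomputable section AuxProof
namespace AuxP

open Matrix Filter
open scoped Matrix.Norms.L2Operator

variable {m : ℕ}

lemma wordP_nil (p : Fin m → ℝ) : wordP p ([] : List (Fin m)) = 1 := rfl

lemma wordP_cons (p : Fin m → ℝ) (i : Fin m) (I : List (Fin m)) :
    wordP p (i :: I) = p i * wordP p I := by simp [wordP]

lemma wordP_nonneg {p : Fin m → ℝ} (hp : ∀ i, 0 ≤ p i) (I : List (Fin m)) :
    0 ≤ wordP p I := by
  induction I with
  | nil => norm_num [wordP_nil]
  | cons i I ih => rw [wordP_cons]; exact mul_nonneg (hp i) ih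

lemma wordP_pos {p : Fin m → ℝ} (hp : ∀ i, 0 < p i) (I : List (Fin m)) :
    0 < wordP p I := by
  induction I with
  | nil => norm_num [wordP_nil]
  | cons i I ih => rw [wordP_cons]; exact mul_pos (hp i) ih

lemma wordP_rpow {p : Fin m → ℝ} (hp : ∀ i, 0 ≤ p i) (q : ℝ) (I : List (Fin m)) :
    wordP p I ^ q = wordP (fun i => p i ^ q) I := by
  induction I with
  | nil => simp [wordP_nil]
  | cons i I ih => rw [wordP_cons, wordP_cons, Real.mul_rpow (hp i) (wordP_nonneg hp I), ih]

lemma wordP_const_mul (C : ℝ) (g : Fin m → ℝ) (I : List (Fin m)) :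
    wordP (fun i => C * g i) I = C ^ I.length * wordP g I := by
  induction I with
  | nil => simp [wordP_nil]
  | cons i I ih => rw [wordP_cons, wordP_cons]; simp only [List.length_cons, ih]; ring

lemma wordP_ofFn (f : Fin m → ℝ) {k : ℕ} (g : Fin k → Fin m) :
    wordP f (List.ofFn g) = ∏ j, f (g j) := by
  simp [wordP, List.map_ofFn, List.prod_ofFn]

lemma summable_wordP {f : Fin m → ℝ} (hf : ∀ i, 0 ≤ f i) (h1 : ∑ i, f i < 1) :
    Summable (fun I : List (Fin m) => wordP f I) := by
  have h0 : (0:ℝ) ≤ ∑ i, f i := Finset.sum_nonneg fun i _ => hf i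
  have hsig : Summable (fun x : Σ n, Fin n → Fin m => wordP f (List.ofFn x.2)) := by
    refine (summable_sigma_of_nonneg fun x => wordP_nonneg hf _).2 ⟨fun n => .of_finite, ?_⟩
    refine Summable.congr (summable_geometric_of_lt_one h0 h1) fun n => ?_
    rw [tsum_fintype]
    rw [show (∑ g : Fin n → Fin m, wordP f (List.ofFn g)) = ∑ g : Fin n → Fin m, ∏ j, f (g j)
      from Finset.sum_congr rfl fun g _ => wordP_ofFn f g]
    rw [Finset.sum_pow' Finset.univ f n, Fintype.piFinset_univ]
  exact (Equiv.summable_iff (List.equivSigmaTuple (α := Fin m)).symm).1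
    (hsig.congr fun x => by rcases x with ⟨n, g⟩; simp [List.equivSigmaTuple])

lemma not_summable_of_ge {f : Fin m → ℝ} (hf : ∀ i, 0 ≤ f i) (h1 : 1 ≤ ∑ i, f i)
    {g : {I : List (Fin m) // I ≠ []} → ℝ} (hg : ∀ I, wordP f I.1 ≤ g I) :
    ¬ Summable g := by
  intro hS
  have hfs : Summable (fun I : {I : List (Fin m) // I ≠ []} => wordP f I.1) :=
    hS.of_nonneg_of_le (fun I => wordP_nonneg hf _) hg
  have hind : Summable (Set.indicator {I : List (Fin m) | I ≠ []} (wordP f)) :=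
    summable_subtype_iff_indicator.1 hfs
  have h2 : Summable (fun x : Σ n, Fin n → Fin m =>
      Set.indicator {I : List (Fin m) | I ≠ []} (wordP f) (List.ofFn x.2)) := by
    refine ((Equiv.summable_iff (List.equivSigmaTuple (α := Fin m)).symm).2 hind).congr fun x => ?_
    rcases x with ⟨n, g⟩
    simp [List.equivSigmaTuple]
  have h3 := ((summable_sigma_of_nonneg fun x =>
      Set.indicator_nonneg (fun I _ => wordP_nonneg hf I) _).1 h2).2
  have h4 := h3.tendsto_atTop_zero
  have h5 : ∀ n : ℕ, 1 ≤ n → (1:ℝ) ≤ ∑' g : Fin n → Fin m,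
      Set.indicator {I : List (Fin m) | I ≠ []} (wordP f) (List.ofFn g) := by
    intro n hn
    rw [tsum_fintype]
    have he : ∀ g : Fin n → Fin m,
        Set.indicator {I : List (Fin m) | I ≠ []} (wordP f) (List.ofFn g) = ∏ j, f (g j) := by
      intro g
      rw [Set.indicator_of_mem, wordP_ofFn]
      show List.ofFn g ≠ []
      intro hnil
      have := congrArg List.length hnil
      simp at this
      omega
    rw [Finset.sum_congr rfl fun g _ => he g]
    calc (1:ℝ) ≤ (∑ i, f i) ^ n := one_le_pow₀ h1
      _ = ∑ g : Fin n → Fin m, ∏ j, f (g j) := by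
          rw [Finset.sum_pow' Finset.univ f n, Fintype.piFinset_univ]
  have := ge_of_tendsto h4 (eventually_atTop.2 ⟨1, h5⟩)
  linarith

end AuxP
end AuxProof

noncomputable section
namespace AuxP
open Matrix
open scoped Matrix.Norms.L2Operator

variable {d : ℕ} {A : Matrix (Fin d) (Fin d) ℝ}

lemma eig_pos (hA : A.det ≠ 0) (j : Fin d) :
    0 < (Matrix.isHermitian_conjTranspose_mul_self A).eigenvalues j := by
  set hH := Matrix.isHermitian_conjTranspose_mul_self A
  have hnn := Matrix.eigenvalues_conjTranspose_mul_self_nonneg A j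
  rcases hnn.eq_or_lt with h|h
  · exfalso
    have hdet : (Aᴴ * A).det ≠ 0 := by
      rw [Matrix.det_mul, Matrix.det_conjTranspose, star_trivial]
      exact mul_ne_zero hA hA
    rw [hH.det_eq_prod_eigenvalues] at hdet
    exact hdet (Finset.prod_eq_zero (Finset.mem_univ j) (by rw [← h]; norm_num))
  · exact h

lemma eig_le (A : Matrix (Fin d) (Fin d) ℝ) (j : Fin d) :
    (Matrix.isHermitian_conjTranspose_mul_self A).eigenvalues j ≤ ‖A‖ * ‖A‖ := by
  set hH := Matrix.isHermitian_conjTranspose_mul_self A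
  set v := hH.eigenvectorBasis j with hv
  have hnv : ‖v‖ = 1 := hH.eigenvectorBasis.orthonormal.1 j
  have hmv := hH.mulVec_eigenvectorBasis j
  have key : (EuclideanSpace.equiv (Fin d) ℝ).symm ((Aᴴ * A) *ᵥ v) = hH.eigenvalues j • v :=
    congrArg (EuclideanSpace.equiv (Fin d) ℝ).symm hmv
  have hμ := Matrix.eigenvalues_conjTranspose_mul_self_nonneg A j
  have hle := Matrix.l2_opNorm_mulVec (Aᴴ * A) v
  rw [key, norm_smul, hnv, mul_one, Real.norm_eq_abs, abs_of_nonneg hμ] at hle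
  calc hH.eigenvalues j ≤ ‖Aᴴ * A‖ * 1 := hle
    _ = ‖A‖ * ‖A‖ := by rw [mul_one, Matrix.l2_opNorm_conjTranspose_mul_self]

lemma singVal_pos (hA : A.det ≠ 0) (i : Fin d) : 0 < singVal d A i :=
  Real.sqrt_pos.2 (eig_pos hA _)

lemma singVal_anti {i j : Fin d} (hij : i ≤ j) : singVal d A j ≤ singVal d A i := by
  apply Real.sqrt_le_sqrt
  exact Tuple.monotone_sort (Matrix.isHermitian_conjTranspose_mul_self A).eigenvalues
    (Fin.rev_le_rev.2 hij)

lemma singVal_le_norm (A : Matrix (Fin d) (Fin d) ℝ) (i : Fin d) : singVal d A i ≤ ‖A‖ := by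
  have h := eig_le A ((Tuple.sort (Matrix.isHermitian_conjTranspose_mul_self A).eigenvalues) i.rev)
  calc singVal d A i ≤ Real.sqrt (‖A‖ * ‖A‖) := Real.sqrt_le_sqrt h
    _ = ‖A‖ := by rw [← Real.sqrt_mul_self (norm_nonneg A), Real.sqrt_mul_self (norm_nonneg A),
        Real.sqrt_mul_self (norm_nonneg A)]

lemma svNat_nonneg (d : ℕ) (A : Matrix (Fin d) (Fin d) ℝ) (i : ℕ) : 0 ≤ svNat d A i := by
  rw [svNat]; split
  · exact Real.sqrt_nonneg _
  · exact le_refl 0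

lemma svNat_pos (hA : A.det ≠ 0) {i : ℕ} (hi : i < d) : 0 < svNat d A i := by
  rw [svNat, dif_pos hi]; exact singVal_pos hA _

lemma svNat_anti {i j : ℕ} (hij : i ≤ j) (hj : j < d) : svNat d A j ≤ svNat d A i := by
  rw [svNat, svNat, dif_pos hj, dif_pos (lt_of_le_of_lt hij hj)]
  exact singVal_anti hij

lemma svNat_le_norm {i : ℕ} (hi : i < d) : svNat d A i ≤ ‖A‖ := by
  rw [svNat, dif_pos hi]; exact singVal_le_norm A _

/-- Piecewise linear representation of `log ∘ svf` on `[0, d]`. -/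
def Ffun (d : ℕ) (A : Matrix (Fin d) (Fin d) ℝ) (s : ℝ) : ℝ :=
  Real.log (svNat d A 0) * s +
    ∑ i ∈ Finset.Ico 1 d, (Real.log (svNat d A i) - Real.log (svNat d A (i-1)))
      * max (s - (i:ℝ)) 0

lemma abel_sum (L : ℕ → ℝ) (s : ℝ) (k : ℕ) :
    L 0 * s + ∑ i ∈ Finset.Ico 1 (k+1), (L i - L (i-1)) * (s - (i:ℝ)) =
    (∑ i ∈ Finset.range k, L i) + (s - (k:ℝ)) * L k := by
  induction k with
  | zero =>
      rw [Finset.Ico_self, Finset.sum_empty, Finset.range_zero, Finset.sum_empty]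
      push_cast; ring
  | succ k ih =>
      rw [Finset.sum_Ico_succ_top (by omega : 1 ≤ k+1), ← add_assoc, ih,
        Finset.sum_range_succ]
      simp only [Nat.add_sub_cancel]
      push_cast
      ring

lemma svf_eq_exp (hA : A.det ≠ 0) {s : ℝ} (h0 : 0 ≤ s) (hsd : s ≤ (d:ℝ)) :
    svf d A s = Real.exp (Ffun d A s) := by
  rcases eq_or_lt_of_le h0 with h|hs
  · rw [← h]
    rw [svf, if_pos rfl, Ffun]
    rw [Finset.sum_eq_zero, mul_zero, add_zero, Real.exp_zero]
    intro i hi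
    rw [Finset.mem_Ico] at hi
    have : (0:ℝ) - (i:ℝ) ≤ 0 := by
      have : (1:ℝ) ≤ (i:ℝ) := by exact_mod_cast hi.1
      linarith
    rw [max_eq_right this, mul_zero]
  · have hk1 : 1 ≤ ⌈s⌉₊ := Nat.one_le_iff_ne_zero.2 (by
      simp only [ne_eq, Nat.ceil_eq_zero, not_le]; exact hs)
    have hkd : ⌈s⌉₊ ≤ d := Nat.ceil_le.2 hsd
    have hsk : s ≤ (⌈s⌉₊:ℝ) := Nat.le_ceil s
    have hks : (⌈s⌉₊:ℝ) - 1 < s := by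
      have := Nat.ceil_lt_add_one h0
      linarith
    obtain ⟨k', hk'⟩ : ∃ k', ⌈s⌉₊ = k' + 1 := ⟨⌈s⌉₊ - 1, by omega⟩
    rw [hk'] at hkd hsk hks
    have hsum : ∑ i ∈ Finset.Ico 1 d,
        (Real.log (svNat d A i) - Real.log (svNat d A (i-1))) * max (s - (i:ℝ)) 0
        = ∑ i ∈ Finset.Ico 1 (k'+1),
        (Real.log (svNat d A i) - Real.log (svNat d A (i-1))) * (s - (i:ℝ)) := by
      rw [← Finset.sum_subset (Finset.Ico_subset_Ico le_rfl hkd)]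
      · apply Finset.sum_congr rfl
        intro i hi
        rw [Finset.mem_Ico] at hi
        have hile : (i:ℝ) ≤ (k':ℝ) := by exact_mod_cast Nat.lt_succ_iff.1 hi.2
        have : 0 ≤ s - (i:ℝ) := by push_cast at hks ⊢; linarith
        rw [max_eq_left this]
      · intro i hi hni
        rw [Finset.mem_Ico] at hi
        rw [Finset.mem_Ico] at hni
        have hki : (k'+1 : ℕ) ≤ i := by omega
        have : s - (i:ℝ) ≤ 0 := by
          have h2 : ((k'+1 : ℕ):ℝ) ≤ (i:ℝ) := by exact_mod_cast hki
          push_cast at h2 hsk ⊢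
          linarith
        rw [max_eq_right this, mul_zero]
    rw [Ffun, hsum, abel_sum (fun i => Real.log (svNat d A i)) s k']
    rw [svf, if_neg (ne_of_gt hs), if_pos hsd, hk']
    have hcast : ((k' + 1 - 1 : ℕ) : ℝ) = (k' : ℝ) := by norm_num
    rw [show k' + 1 - 1 = k' from rfl]
    rw [Real.exp_add, Real.exp_sum]
    have hprod : ∀ i ∈ Finset.range k', Real.exp (Real.log (svNat d A i)) = svNat d A i := by
      intro i hi
      rw [Finset.mem_range] at hi
      exact Real.exp_log (svNat_pos hA (by omega))
    rw [Finset.prod_congr rfl hprod]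
    congr 1
    rw [Real.rpow_def_of_pos (svNat_pos hA (by omega : k' < d)), mul_comm]

lemma svf_pos (hA : A.det ≠ 0) {s : ℝ} (h0 : 0 ≤ s) : 0 < svf d A s := by
  rcases eq_or_lt_of_le h0 with h|hs
  · rw [← h, svf, if_pos rfl]; norm_num
  · rcases le_or_gt s (d:ℝ) with h|h
    · rw [svf_eq_exp hA h0 h]; exact Real.exp_pos _
    · rw [svf, if_neg (ne_of_gt hs), if_neg (not_le.2 h)]
      exact Real.rpow_pos_of_pos (Finset.prod_pos fun i hi =>
        svNat_pos hA (Finset.mem_range.1 hi)) _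

lemma norm_pos_of_det (hA : A.det ≠ 0) (hd : 1 ≤ d) : 0 < ‖A‖ :=
  lt_of_lt_of_le (svNat_pos hA (by omega : 0 < d)) (svNat_le_norm (by omega))

lemma svf_le_rpow_norm (hA : A.det ≠ 0) (hd : 1 ≤ d) {s : ℝ} (h0 : 0 ≤ s) :
    svf d A s ≤ ‖A‖ ^ s := by
  have hnp : 0 < ‖A‖ := norm_pos_of_det hA hd
  rcases eq_or_lt_of_le h0 with h|hs
  · rw [← h, svf, if_pos rfl, Real.rpow_zero]
  · rcases le_or_gt s (d:ℝ) with h|h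
    · have hk1 : 1 ≤ ⌈s⌉₊ := Nat.one_le_iff_ne_zero.2 (by
        simp only [ne_eq, Nat.ceil_eq_zero, not_le]; exact hs)
      have hkd : ⌈s⌉₊ ≤ d := Nat.ceil_le.2 h
      have hks : (⌈s⌉₊:ℝ) - 1 < s := by have := Nat.ceil_lt_add_one h0; linarith
      obtain ⟨k', hk'⟩ : ∃ k', ⌈s⌉₊ = k' + 1 := ⟨⌈s⌉₊ - 1, by omega⟩
      rw [hk'] at hkd hks
      rw [svf, if_neg (ne_of_gt hs), if_pos h, hk']
      rw [show k' + 1 - 1 = k' from rfl]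
      have hexp : 0 ≤ s - ((k':ℕ):ℝ) := by push_cast at hks ⊢; linarith
      have h1 : ∏ i ∈ Finset.range k', svNat d A i ≤ ‖A‖ ^ (k' : ℕ) := by
        calc ∏ i ∈ Finset.range k', svNat d A i ≤ ∏ _i ∈ Finset.range k', ‖A‖ := by
              apply Finset.prod_le_prod
              · intro i _; exact svNat_nonneg d A i
              · intro i hi; exact svNat_le_norm (by rw [Finset.mem_range] at hi; omega)
          _ = ‖A‖ ^ (k' : ℕ) := by rw [Finset.prod_const, Finset.card_range]
      have h2 : svNat d A k' ^ (s - ((k':ℕ):ℝ)) ≤ ‖A‖ ^ (s - ((k':ℕ):ℝ)) :=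
        Real.rpow_le_rpow (svNat_nonneg d A k') (svNat_le_norm (by omega)) hexp
      calc (∏ i ∈ Finset.range k', svNat d A i) * svNat d A k' ^ (s - ((k':ℕ):ℝ))
          ≤ ‖A‖ ^ (k':ℕ) * ‖A‖ ^ (s - ((k':ℕ):ℝ)) := by
            apply mul_le_mul h1 h2 (Real.rpow_nonneg (svNat_nonneg d A k') _)
              (pow_nonneg (norm_nonneg A) _)
        _ = ‖A‖ ^ s := by
            rw [← Real.rpow_natCast ‖A‖ k', ← Real.rpow_add hnp]
            ring_nf
    · rw [svf, if_neg (ne_of_gt hs), if_neg (not_le.2 h)]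
      have hd0 : (0:ℝ) < (d:ℝ) := by exact_mod_cast (by omega : 0 < d)
      have h1 : ∏ i ∈ Finset.range d, svNat d A i ≤ ‖A‖ ^ (d : ℕ) := by
        calc ∏ i ∈ Finset.range d, svNat d A i ≤ ∏ _i ∈ Finset.range d, ‖A‖ := by
              apply Finset.prod_le_prod
              · intro i _; exact svNat_nonneg d A i
              · intro i hi; exact svNat_le_norm (Finset.mem_range.1 hi)
          _ = ‖A‖ ^ (d : ℕ) := by rw [Finset.prod_const, Finset.card_range]
      calc (∏ i ∈ Finset.range d, svNat d A i) ^ (s / (d:ℝ))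
          ≤ (‖A‖ ^ (d:ℕ)) ^ (s / (d:ℝ)) := by
            apply Real.rpow_le_rpow (Finset.prod_nonneg fun i _ => svNat_nonneg d A i) h1
            positivity
        _ = ‖A‖ ^ s := by
            rw [← Real.rpow_natCast ‖A‖ d, ← Real.rpow_mul (norm_nonneg A)]
            rw [mul_div_cancel₀ s (ne_of_gt hd0)]

lemma Ffun_anti (hA : A.det ≠ 0) (hA1 : ‖A‖ < 1) (hd : 1 ≤ d) {x y : ℝ}
    (h0 : 0 ≤ x) (hxy : x ≤ y) : Ffun d A y ≤ Ffun d A x := by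
  have hL0 : Real.log (svNat d A 0) ≤ 0 :=
    Real.log_nonpos (svNat_nonneg d A 0) (le_of_lt (lt_of_le_of_lt (svNat_le_norm (by omega)) hA1))
  apply add_le_add
  · exact mul_le_mul_of_nonpos_left hxy hL0
  · apply Finset.sum_le_sum
    intro i hi
    rw [Finset.mem_Ico] at hi
    have hc : Real.log (svNat d A i) - Real.log (svNat d A (i-1)) ≤ 0 := by
      have h1 := svNat_anti (A := A) (by omega : i - 1 ≤ i) hi.2
      have := Real.log_le_log (svNat_pos hA hi.2) h1
      linarith
    have hm : max (x - (i:ℝ)) 0 ≤ max (y - (i:ℝ)) 0 :=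
      max_le_max (by linarith) le_rfl
    exact mul_le_mul_of_nonpos_left hm hc

lemma svf_at_d (hA : A.det ≠ 0) (hd : 1 ≤ d) :
    svf d A (d:ℝ) = ∏ i ∈ Finset.range d, svNat d A i := by
  have hd0 : (0:ℝ) < (d:ℝ) := by exact_mod_cast (by omega : 0 < d)
  rw [svf, if_neg (ne_of_gt hd0), if_pos le_rfl, Nat.ceil_natCast]
  obtain ⟨k', rfl⟩ : ∃ k', d = k' + 1 := ⟨d - 1, by omega⟩
  rw [show k' + 1 - 1 = k' from rfl]
  have : (((k'+1 : ℕ)):ℝ) - ((k' : ℕ):ℝ) = 1 := by push_cast; ring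
  rw [this, Real.rpow_one, Finset.prod_range_succ]

lemma svf_anti (hA : A.det ≠ 0) (hA1 : ‖A‖ < 1) (hd : 1 ≤ d) {x y : ℝ}
    (h0 : 0 ≤ x) (hxy : x ≤ y) (hxd : x ≤ (d:ℝ)) : svf d A y ≤ svf d A x := by
  have hin : ∀ {u v : ℝ}, 0 ≤ u → u ≤ v → v ≤ (d:ℝ) → svf d A v ≤ svf d A u := by
    intro u v hu huv hvd
    rw [svf_eq_exp hA hu (le_trans huv hvd), svf_eq_exp hA (le_trans hu huv) hvd]
    exact Real.exp_le_exp.2 (Ffun_anti hA hA1 hd hu huv)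
  rcases le_or_gt y (d:ℝ) with h|h
  · exact hin h0 hxy h
  · have hd0 : (0:ℝ) < (d:ℝ) := by exact_mod_cast (by omega : 0 < d)
    have h1 : svf d A y ≤ svf d A (d:ℝ) := by
      have hB : 0 < ∏ i ∈ Finset.range d, svNat d A i :=
        Finset.prod_pos fun i hi => svNat_pos hA (Finset.mem_range.1 hi)
      have hB1 : ∏ i ∈ Finset.range d, svNat d A i ≤ 1 := by
        apply Finset.prod_le_one
        · intro i _; exact svNat_nonneg d A i
        · intro i hi
          exact le_of_lt (lt_of_le_of_lt (svNat_le_norm (Finset.mem_range.1 hi)) hA1)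
      rw [svf_at_d hA hd, svf, if_neg (ne_of_gt (lt_trans hd0 h)), if_neg (not_le.2 h)]
      calc (∏ i ∈ Finset.range d, svNat d A i) ^ (y / (d:ℝ))
          ≤ (∏ i ∈ Finset.range d, svNat d A i) ^ (1:ℝ) :=
            Real.rpow_le_rpow_of_exponent_ge hB hB1 ((one_le_div hd0).2 h.le)
        _ = ∏ i ∈ Finset.range d, svNat d A i := Real.rpow_one _
    exact le_trans h1 (hin h0 hxd le_rfl)

lemma Ffun_concave2 (hA : A.det ≠ 0) {x y a b : ℝ}
    (ha : 0 ≤ a) (hb : 0 ≤ b) (hab : a + b = 1) :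
    a * Ffun d A x + b * Ffun d A y ≤ Ffun d A (a*x + b*y) := by
  have key : a * (∑ i ∈ Finset.Ico 1 d,
        (Real.log (svNat d A i) - Real.log (svNat d A (i-1))) * max (x - (i:ℝ)) 0)
      + b * (∑ i ∈ Finset.Ico 1 d,
        (Real.log (svNat d A i) - Real.log (svNat d A (i-1))) * max (y - (i:ℝ)) 0)
      ≤ ∑ i ∈ Finset.Ico 1 d,
        (Real.log (svNat d A i) - Real.log (svNat d A (i-1))) * max (a*x + b*y - (i:ℝ)) 0 := by
    rw [Finset.mul_sum, Finset.mul_sum, ← Finset.sum_add_distrib]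
    apply Finset.sum_le_sum
    intro i hi
    rw [Finset.mem_Ico] at hi
    have hc : Real.log (svNat d A i) - Real.log (svNat d A (i-1)) ≤ 0 := by
      have h1 := svNat_anti (A := A) (by omega : i - 1 ≤ i) hi.2
      have := Real.log_le_log (svNat_pos hA hi.2) h1
      linarith
    have hconv : max (a*x + b*y - (i:ℝ)) 0 ≤
        a * max (x - (i:ℝ)) 0 + b * max (y - (i:ℝ)) 0 := by
      apply max_le
      · have e : a*x + b*y - (i:ℝ) = a*(x - (i:ℝ)) + b*(y - (i:ℝ)) := by
          linear_combination (i:ℝ) * hab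
        rw [e]
        exact add_le_add (mul_le_mul_of_nonneg_left (le_max_left _ _) ha)
          (mul_le_mul_of_nonneg_left (le_max_left _ _) hb)
      · exact add_nonneg (mul_nonneg ha (le_max_right _ _)) (mul_nonneg hb (le_max_right _ _))
    calc a * ((Real.log (svNat d A i) - Real.log (svNat d A (i-1))) * max (x - (i:ℝ)) 0)
          + b * ((Real.log (svNat d A i) - Real.log (svNat d A (i-1))) * max (y - (i:ℝ)) 0)
        = (Real.log (svNat d A i) - Real.log (svNat d A (i-1))) *
            (a * max (x - (i:ℝ)) 0 + b * max (y - (i:ℝ)) 0) := by ring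
      _ ≤ (Real.log (svNat d A i) - Real.log (svNat d A (i-1))) * max (a*x + b*y - (i:ℝ)) 0 :=
          mul_le_mul_of_nonpos_left hconv hc
  rw [Ffun, Ffun, Ffun]
  calc a * (Real.log (svNat d A 0) * x + _) + b * (Real.log (svNat d A 0) * y + _)
      = Real.log (svNat d A 0) * (a*x + b*y) +
        (a * (∑ i ∈ Finset.Ico 1 d,
          (Real.log (svNat d A i) - Real.log (svNat d A (i-1))) * max (x - (i:ℝ)) 0)
        + b * (∑ i ∈ Finset.Ico 1 d,
          (Real.log (svNat d A i) - Real.log (svNat d A (i-1))) * max (y - (i:ℝ)) 0)) := by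
        ring
    _ ≤ _ := add_le_add_right key _

lemma svf_two_point (hA : A.det ≠ 0) {x y a b : ℝ}
    (hx0 : 0 ≤ x) (hxd : x ≤ (d:ℝ)) (hy0 : 0 ≤ y) (hyd : y ≤ (d:ℝ))
    (ha : 0 ≤ a) (hb : 0 ≤ b) (hab : a + b = 1) :
    svf d A x ^ a * svf d A y ^ b ≤ svf d A (a*x + b*y) := by
  have hc0 : 0 ≤ a*x + b*y := add_nonneg (mul_nonneg ha hx0) (mul_nonneg hb hy0)
  have hcd : a*x + b*y ≤ (d:ℝ) := by
    have h1 : a*x ≤ a*(d:ℝ) := mul_le_mul_of_nonneg_left hxd ha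
    have h2 : b*y ≤ b*(d:ℝ) := mul_le_mul_of_nonneg_left hyd hb
    have h3 : a*(d:ℝ) + b*(d:ℝ) = (d:ℝ) := by linear_combination (d:ℝ) * hab
    linarith
  rw [svf_eq_exp hA hx0 hxd, svf_eq_exp hA hy0 hyd, svf_eq_exp hA hc0 hcd]
  rw [← Real.exp_mul, ← Real.exp_mul, ← Real.exp_add, Real.exp_le_exp]
  calc Ffun d A x * a + Ffun d A y * b = a * Ffun d A x + b * Ffun d A y := by ring
    _ ≤ _ := Ffun_concave2 hA ha hb hab

end AuxP
end

noncomputable section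
namespace AuxP
open Matrix
open scoped Matrix.Norms.L2Operator

lemma matOpNorm_eq (d : ℕ) (A : Matrix (Fin d) (Fin d) ℝ) : matOpNorm d A = ‖A‖ := rfl

variable {d m : ℕ} {T : Fin m → Matrix (Fin d) (Fin d) ℝ} {p : Fin m → ℝ}

def Sset (d m : ℕ) (T : Fin m → Matrix (Fin d) (Fin d) ℝ) (p : Fin m → ℝ) (q : ℝ) : Set ℝ :=
  {s : ℝ | 0 ≤ s ∧ DSeriesConv d m T p q s}

lemma wordT_nil : wordT T [] = 1 := List.prod_nil

lemma wordT_cons (i : Fin m) (I : List (Fin m)) : wordT T (i :: I) = T i * wordT T I := by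
  simp [wordT]

lemma det_wordT (hTinv : ∀ i, (T i).det ≠ 0) (I : List (Fin m)) : (wordT T I).det ≠ 0 := by
  induction I with
  | nil => rw [wordT_nil, Matrix.det_one]; norm_num
  | cons i I ih => rw [wordT_cons, Matrix.det_mul]; exact mul_ne_zero (hTinv i) ih

lemma exists_c (hd : 1 ≤ d) (hm : 2 ≤ m) (hTinv : ∀ i, (T i).det ≠ 0)
    (hTn : ∀ i, ‖T i‖ < 1) : ∃ c : ℝ, 0 < c ∧ c < 1 ∧ ∀ i, ‖T i‖ ≤ c := by
  haveI : Nonempty (Fin m) := ⟨⟨0, by omega⟩⟩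
  haveI : Finite (Fin m) := inferInstance
  obtain ⟨i0, hi0⟩ := Finite.exists_max (fun i => ‖T i‖)
  exact ⟨‖T i0‖, norm_pos_of_det (hTinv i0) hd, hTn i0, hi0⟩

lemma norm_wordT_le {c : ℝ} (hc0 : 0 ≤ c) (hc : ∀ i, ‖T i‖ ≤ c) :
    ∀ I : List (Fin m), I ≠ [] → ‖wordT T I‖ ≤ c ^ I.length := by
  intro I
  induction I with
  | nil => intro h; exact absurd rfl h
  | cons i J ih =>
      intro _
      rcases eq_or_ne J [] with rfl|hJ
      · rw [wordT_cons, wordT_nil, mul_one]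
        simpa using hc i
      · rw [wordT_cons]
        calc ‖T i * wordT T J‖ ≤ ‖T i‖ * ‖wordT T J‖ := Matrix.l2_opNorm_mul _ _
          _ ≤ c * c ^ J.length :=
              mul_le_mul (hc i) (ih hJ) (norm_nonneg _) hc0
          _ = c ^ (i :: J).length := by rw [List.length_cons, pow_succ]; ring

lemma norm_wordT_lt_one {c : ℝ} (hc0 : 0 < c) (hc1 : c < 1) (hc : ∀ i, ‖T i‖ ≤ c)
    {I : List (Fin m)} (hI : I ≠ []) : ‖wordT T I‖ < 1 := by
  have h1 := norm_wordT_le hc0.le hc I hI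
  have h2 : c ^ I.length ≤ c ^ 1 :=
    pow_le_pow_of_le_one hc0.le hc1.le (by
      have := List.length_pos_iff.2 hI; omega)
  rw [pow_one] at h2
  linarith

lemma p_lt_one (hm : 2 ≤ m) (hp : ∀ i, 0 < p i) (hp1 : ∑ i, p i = 1) (i : Fin m) : p i < 1 := by
  obtain ⟨j, hji⟩ : ∃ j : Fin m, j ≠ i := by
    rcases eq_or_ne i.val 0 with h|h
    · refine ⟨⟨1, by omega⟩, fun hji => ?_⟩
      have := congrArg Fin.val hji
      simp at this
      omega
    · refine ⟨⟨0, by omega⟩, fun hji => ?_⟩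
      have := congrArg Fin.val hji
      simp at this
      omega
  calc p i < ∑ k, p k :=
      Finset.single_lt_sum hji (Finset.mem_univ i) (Finset.mem_univ j) (hp j)
        (fun k _ _ => (hp k).le)
    _ = 1 := hp1

lemma sum_rpow_lt_one (hm : 2 ≤ m) (hp : ∀ i, 0 < p i) (hp1 : ∑ i, p i = 1)
    {q : ℝ} (hq : 1 < q) : ∑ i, p i ^ q < 1 := by
  haveI : Nonempty (Fin m) := ⟨⟨0, by omega⟩⟩
  calc ∑ i, p i ^ q < ∑ i, p i := by
        apply Finset.sum_lt_sum_of_nonempty Finset.univ_nonempty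
        intro i _
        have h1 : p i ^ q < p i ^ (1:ℝ) :=
          Real.rpow_lt_rpow_of_exponent_gt (hp i) (p_lt_one hm hp hp1 i) hq
        rwa [Real.rpow_one] at h1
    _ = 1 := hp1

lemma sum_rpow_pos (hm : 2 ≤ m) (hp : ∀ i, 0 < p i) {q : ℝ} : 0 < ∑ i, p i ^ q := by
  haveI : Nonempty (Fin m) := ⟨⟨0, by omega⟩⟩
  exact Finset.sum_pos (fun i _ => Real.rpow_pos_of_pos (hp i) q) Finset.univ_nonempty

lemma zero_mem (hm : 2 ≤ m) (hp : ∀ i, 0 < p i) (hp1 : ∑ i, p i = 1)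
    {q : ℝ} (hq : 1 < q) : (0:ℝ) ∈ Sset d m T p q := by
  refine ⟨le_refl 0, ?_⟩
  have hsum := summable_wordP (f := fun i => p i ^ q)
    (fun i => Real.rpow_nonneg (hp i).le q) (sum_rpow_lt_one hm hp hp1 hq)
  have h2 := hsum.comp_injective (Subtype.val_injective
    (p := fun I : List (Fin m) => I ≠ []))
  show Summable fun I : {I : List (Fin m) // I ≠ []} =>
    svf d (wordT T I.1) 0 ^ (1 - q) * wordP p I.1 ^ q
  refine h2.congr fun I => ?_
  show wordP (fun i => p i ^ q) I.1 = svf d (wordT T I.1) 0 ^ (1 - q) * wordP p I.1 ^ q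
  rw [svf, if_pos rfl, Real.one_rpow, one_mul, wordP_rpow (fun i => (hp i).le)]

lemma bdd_above (hd : 1 ≤ d) (hm : 2 ≤ m) (hTinv : ∀ i, (T i).det ≠ 0)
    (hTn : ∀ i, ‖T i‖ < 1) (hp : ∀ i, 0 < p i) (hp1 : ∑ i, p i = 1)
    {q : ℝ} (hq : 1 < q) : BddAbove (Sset d m T p q) := by
  obtain ⟨c, hc0, hc1, hcle⟩ := exists_c hd hm hTinv hTn
  set P := ∑ i, p i ^ q with hP
  have hP0 : 0 < P := sum_rpow_pos hm hp
  have hP1 : P < 1 := sum_rpow_lt_one hm hp hp1 hq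
  have hlc : Real.log c < 0 := Real.log_neg hc0 hc1
  have hlP : Real.log P < 0 := Real.log_neg hP0 hP1
  have hD : (q - 1) * Real.log c < 0 := mul_neg_of_pos_of_neg (by linarith) hlc
  refine ⟨Real.log P / ((q - 1) * Real.log c), fun s hs => ?_⟩
  by_contra hlt
  push_neg at hlt
  obtain ⟨h0, hconv⟩ := hs
  have hmul : s * ((q - 1) * Real.log c) < Real.log P := (div_lt_iff_of_neg hD).1 hlt
  have hexp0 : 0 ≤ Real.log c * (s * (1 - q)) + Real.log P := by
    have he : Real.log c * (s * (1 - q)) = -(s * ((q - 1) * Real.log c)) := by ring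
    linarith
  set C := c ^ (s * (1 - q)) with hC
  have hC0 : 0 < C := Real.rpow_pos_of_pos hc0 _
  have hsum1 : (1:ℝ) ≤ ∑ i, C * p i ^ q := by
    rw [← Finset.mul_sum, ← hP, hC, Real.rpow_def_of_pos hc0, ← Real.exp_log hP0,
      ← Real.exp_add]
    exact Real.one_le_exp hexp0
  refine not_summable_of_ge (f := fun i => C * p i ^ q)
    (fun i => mul_nonneg hC0.le (Real.rpow_nonneg (hp i).le q)) hsum1 ?_ hconv
  intro I
  set A := wordT T I.1 with hAdef
  have hA : A.det ≠ 0 := det_wordT hTinv I.1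
  set k := I.1.length with hk
  have hCk : C ^ k ≤ svf d A s ^ (1 - q) := by
    have hsvf_le : svf d A s ≤ (c ^ k) ^ s :=
      le_trans (svf_le_rpow_norm hA hd h0)
        (Real.rpow_le_rpow (norm_nonneg _) (norm_wordT_le hc0.le hcle I.1 I.2) h0)
    have h2 : ((c ^ k) ^ s) ^ (1 - q) ≤ svf d A s ^ (1 - q) :=
      Real.rpow_le_rpow_of_nonpos (svf_pos hA h0) hsvf_le (by linarith)
    have e1 : C ^ k = c ^ (s * (1 - q) * (k:ℝ)) := by
      rw [← Real.rpow_natCast C k, hC, ← Real.rpow_mul hc0.le]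
    have e2 : ((c ^ k : ℝ)) ^ s = c ^ ((k:ℝ) * s) := by
      rw [← Real.rpow_natCast c k, ← Real.rpow_mul hc0.le]
    have e3 : (c ^ ((k:ℝ) * s)) ^ (1 - q) = c ^ ((k:ℝ) * s * (1 - q)) := by
      rw [← Real.rpow_mul hc0.le]
    rw [e2, e3] at h2
    rw [e1, show s * (1 - q) * (k:ℝ) = (k:ℝ) * s * (1 - q) by ring]
    exact h2
  calc wordP (fun i => C * p i ^ q) I.1 = C ^ k * wordP (fun i => p i ^ q) I.1 := by
        rw [wordP_const_mul, hk]
    _ = C ^ k * wordP p I.1 ^ q := by rw [wordP_rpow (fun i => (hp i).le)]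
    _ ≤ svf d A s ^ (1 - q) * wordP p I.1 ^ q :=
        mul_le_mul_of_nonneg_right hCk (Real.rpow_nonneg (wordP_nonneg (fun i => (hp i).le) _) q)

lemma d_mem (hd : 1 ≤ d) (hm : 2 ≤ m) (hTinv : ∀ i, (T i).det ≠ 0)
    (hTn : ∀ i, ‖T i‖ < 1) (hp : ∀ i, 0 < p i) {q s : ℝ} (hq : 1 < q)
    (hs : s ∈ Sset d m T p q) (hds : (d:ℝ) ≤ s) : ((d:ℕ):ℝ) ∈ Sset d m T p q := by
  obtain ⟨c, hc0, hc1, hcle⟩ := exists_c hd hm hTinv hTn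
  obtain ⟨h0, hconv⟩ := hs
  refine ⟨by positivity, ?_⟩
  show Summable fun I : {I : List (Fin m) // I ≠ []} =>
    svf d (wordT T I.1) ((d:ℕ):ℝ) ^ (1 - q) * wordP p I.1 ^ q
  refine Summable.of_nonneg_of_le (fun I => ?_) (fun I => ?_) hconv
  · exact mul_nonneg (Real.rpow_nonneg (svf_pos (det_wordT hTinv I.1) (by positivity)).le _)
      (Real.rpow_nonneg (wordP_nonneg (fun i => (hp i).le) _) q)
  · have hA := det_wordT hTinv I.1
    have hAn : ‖wordT T I.1‖ < 1 := norm_wordT_lt_one hc0 hc1 hcle I.2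
    have hmono : svf d (wordT T I.1) s ≤ svf d (wordT T I.1) ((d:ℕ):ℝ) :=
      svf_anti hA hAn hd (by positivity) hds le_rfl
    exact mul_le_mul_of_nonneg_right
      (Real.rpow_le_rpow_of_nonpos (svf_pos hA h0) hmono (by linarith))
      (Real.rpow_nonneg (wordP_nonneg (fun i => (hp i).le) _) q)

lemma mem_convex (hd : 1 ≤ d) (hm : 2 ≤ m) (hTinv : ∀ i, (T i).det ≠ 0)
    (hTn : ∀ i, ‖T i‖ < 1) (hp : ∀ i, 0 < p i)
    {q₁ q₂ a b : ℝ} (hq1 : 1 < q₁) (hq2 : 1 < q₂) (ha : 0 < a) (hb : 0 < b)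
    (hab : a + b = 1) {s₁ s₂ : ℝ}
    (h1 : s₁ ∈ Sset d m T p q₁) (h2 : s₂ ∈ Sset d m T p q₂)
    (hs1d : s₁ ≤ (d:ℝ)) (hs2d : s₂ ≤ (d:ℝ)) :
    (a*(q₁-1)/(a*q₁+b*q₂-1)) * s₁ + (b*(q₂-1)/(a*q₁+b*q₂-1)) * s₂
      ∈ Sset d m T p (a*q₁+b*q₂) := by
  set q := a*q₁+b*q₂ with hqdef
  have e : q - 1 = a*(q₁-1) + b*(q₂-1) := by rw [hqdef]; linear_combination hab
  have hq : 0 < q - 1 := by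
    rw [e]
    have := mul_pos ha (sub_pos.2 hq1)
    have := mul_pos hb (sub_pos.2 hq2)
    linarith
  have hqne : q - 1 ≠ 0 := ne_of_gt hq
  set w1 := a*(q₁-1)/(q-1) with hw1def
  set w2 := b*(q₂-1)/(q-1) with hw2def
  have hw1 : 0 ≤ w1 := by
    apply div_nonneg _ hq.le
    exact mul_nonneg ha.le (by linarith)
  have hw2 : 0 ≤ w2 := by
    apply div_nonneg _ hq.le
    exact mul_nonneg hb.le (by linarith)
  have hw12 : w1 + w2 = 1 := by
    rw [hw1def, hw2def, ← add_div, ← e, div_self hqne]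
  have hs0 : 0 ≤ w1 * s₁ + w2 * s₂ :=
    add_nonneg (mul_nonneg hw1 h1.1) (mul_nonneg hw2 h2.1)
  refine ⟨hs0, ?_⟩
  have hmaj : Summable (fun I : {I : List (Fin m) // I ≠ []} =>
      a * (svf d (wordT T I.1) s₁ ^ (1-q₁) * wordP p I.1 ^ q₁)
      + b * (svf d (wordT T I.1) s₂ ^ (1-q₂) * wordP p I.1 ^ q₂)) :=
    (h1.2.mul_left a).add (h2.2.mul_left b)
  show Summable fun I : {I : List (Fin m) // I ≠ []} =>
    svf d (wordT T I.1) (w1 * s₁ + w2 * s₂) ^ (1 - q) * wordP p I.1 ^ q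
  refine Summable.of_nonneg_of_le (fun I => ?_) (fun I => ?_) hmaj
  · exact mul_nonneg (Real.rpow_nonneg (svf_pos (det_wordT hTinv I.1) hs0).le _)
      (Real.rpow_nonneg (wordP_nonneg (fun i => (hp i).le) _) q)
  · set A := wordT T I.1 with hAdef
    have hA : A.det ≠ 0 := det_wordT hTinv I.1
    have hx := wordP_pos hp I.1
    have hsvf1 := svf_pos hA h1.1
    have hsvf2 := svf_pos hA h2.1
    have hgeo : svf d A s₁ ^ w1 * svf d A s₂ ^ w2 ≤ svf d A (w1 * s₁ + w2 * s₂) :=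
      svf_two_point hA h1.1 hs1d h2.1 hs2d hw1 hw2 hw12
    have hpos : 0 < svf d A s₁ ^ w1 * svf d A s₂ ^ w2 :=
      mul_pos (Real.rpow_pos_of_pos hsvf1 _) (Real.rpow_pos_of_pos hsvf2 _)
    have step1 : svf d A (w1 * s₁ + w2 * s₂) ^ (1 - q)
        ≤ (svf d A s₁ ^ (1-q₁)) ^ a * (svf d A s₂ ^ (1-q₂)) ^ b := by
      have hmain := Real.rpow_le_rpow_of_nonpos hpos hgeo (by linarith : 1 - q ≤ 0)
      have hw1q : w1 * (1 - q) = (1-q₁) * a := by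
        rw [hw1def]; field_simp; ring
      have hw2q : w2 * (1 - q) = (1-q₂) * b := by
        rw [hw2def]; field_simp; ring
      calc svf d A (w1 * s₁ + w2 * s₂) ^ (1 - q)
          ≤ (svf d A s₁ ^ w1 * svf d A s₂ ^ w2) ^ (1 - q) := hmain
        _ = (svf d A s₁ ^ w1) ^ (1-q) * (svf d A s₂ ^ w2) ^ (1-q) :=
            Real.mul_rpow (Real.rpow_nonneg hsvf1.le _) (Real.rpow_nonneg hsvf2.le _)
        _ = svf d A s₁ ^ (w1 * (1-q)) * svf d A s₂ ^ (w2 * (1-q)) := by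
            rw [← Real.rpow_mul hsvf1.le, ← Real.rpow_mul hsvf2.le]
        _ = (svf d A s₁ ^ (1-q₁)) ^ a * (svf d A s₂ ^ (1-q₂)) ^ b := by
            rw [hw1q, hw2q, Real.rpow_mul hsvf1.le, Real.rpow_mul hsvf2.le]
    have step2 : wordP p I.1 ^ q = (wordP p I.1 ^ q₁) ^ a * (wordP p I.1 ^ q₂) ^ b := by
      rw [← Real.rpow_mul hx.le, ← Real.rpow_mul hx.le, ← Real.rpow_add hx]
      rw [show q₁ * a + q₂ * b = q by rw [hqdef]; ring]
    calc svf d A (w1 * s₁ + w2 * s₂) ^ (1 - q) * wordP p I.1 ^ q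
        ≤ ((svf d A s₁ ^ (1-q₁)) ^ a * (svf d A s₂ ^ (1-q₂)) ^ b) * wordP p I.1 ^ q :=
          mul_le_mul_of_nonneg_right step1 (Real.rpow_nonneg hx.le q)
      _ = ((svf d A s₁ ^ (1-q₁)) ^ a * (wordP p I.1 ^ q₁) ^ a)
          * ((svf d A s₂ ^ (1-q₂)) ^ b * (wordP p I.1 ^ q₂) ^ b) := by
          rw [step2]; ring
      _ = (svf d A s₁ ^ (1-q₁) * wordP p I.1 ^ q₁) ^ a
          * (svf d A s₂ ^ (1-q₂) * wordP p I.1 ^ q₂) ^ b := by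
          rw [Real.mul_rpow (Real.rpow_nonneg hsvf1.le _) (Real.rpow_nonneg hx.le _),
            Real.mul_rpow (Real.rpow_nonneg hsvf2.le _) (Real.rpow_nonneg hx.le _)]
      _ ≤ a * (svf d A s₁ ^ (1-q₁) * wordP p I.1 ^ q₁)
          + b * (svf d A s₂ ^ (1-q₂) * wordP p I.1 ^ q₂) :=
          Real.geom_mean_le_arith_mean2_weighted ha.le hb.le
            (mul_nonneg (Real.rpow_nonneg hsvf1.le _) (Real.rpow_nonneg hx.le _))
            (mul_nonneg (Real.rpow_nonneg hsvf2.le _) (Real.rpow_nonneg hx.le _)) hab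

lemma approx (hd : 1 ≤ d) (hm : 2 ≤ m) (hTinv : ∀ i, (T i).det ≠ 0)
    (hTn : ∀ i, ‖T i‖ < 1) (hp : ∀ i, 0 < p i) (hp1 : ∑ i, p i = 1)
    {q : ℝ} (hq : 1 < q) {ε : ℝ} (hε : 0 < ε) :
    ∃ s, s ∈ Sset d m T p q ∧ s ≤ (d:ℝ) ∧
      min (sSup (Sset d m T p q)) (d:ℝ) - ε ≤ s := by
  have hne : (Sset d m T p q).Nonempty := ⟨0, zero_mem hm hp hp1 hq⟩
  have hbdd := bdd_above hd hm hTinv hTn hp hp1 hq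
  rcases le_or_gt (sSup (Sset d m T p q)) (d:ℝ) with h|h
  · obtain ⟨s, hsmem, hslt⟩ := exists_lt_of_lt_csSup hne
      (by linarith : sSup (Sset d m T p q) - ε < sSup (Sset d m T p q))
    refine ⟨s, hsmem, le_trans (le_csSup hbdd hsmem) h, ?_⟩
    have := min_le_left (sSup (Sset d m T p q)) (d:ℝ)
    linarith
  · obtain ⟨s, hsmem, hds⟩ := exists_lt_of_lt_csSup hne h
    refine ⟨(d:ℝ), d_mem hd hm hTinv hTn hp hq hsmem hds.le, le_refl _, ?_⟩
    have := min_le_right (sSup (Sset d m T p q)) (d:ℝ)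
    linarith

lemma taufun_eq {q : ℝ} (hq : 1 < q) :
    taufun d m T p q = (q - 1) * min (sSup (Sset d m T p q)) (d:ℝ) := by
  rw [taufun, if_neg (ne_of_gt hq), Dfun, if_neg (not_lt.2 hq.le), if_neg (ne_of_gt hq),
    mul_div_cancel_left₀ _ (ne_of_gt (by linarith : (0:ℝ) < q - 1))]
  rfl

end AuxP
end


open scoped Matrix.Norms.L2Operator

theorem statement18 {d m : ℕ} (hd : 1 ≤ d) (hm : 2 ≤ m)
    (T : Fin m → Matrix (Fin d) (Fin d) ℝ)
    (hTinv : ∀ i, (T i).det ≠ 0)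
    (hTnorm : ∀ i, matOpNorm d (T i) < 1)
    (p : Fin m → ℝ) (hp : ∀ i, 0 < p i) (hp1 : ∑ i, p i = 1) :
    ConcaveOn ℝ (Set.Ioi (1 : ℝ)) (taufun d m T p) := by
  classical
  have hTn : ∀ i, ‖T i‖ < 1 := fun i => by
    rw [← AuxP.matOpNorm_eq]; exact hTnorm i
  refine ⟨convex_Ioi 1, ?_⟩
  intro x hx y hy a b ha hb hab
  simp only [smul_eq_mul]
  rcases ha.eq_or_lt with ha0|ha'
  · have hb1 : b = 1 := by linarith
    rw [← ha0, hb1]; norm_num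
  rcases hb.eq_or_lt with hb0|hb'
  · have ha1 : a = 1 := by linarith
    rw [← hb0, ha1]; norm_num
  have hx1 : (1:ℝ) < x := hx
  have hy1 : (1:ℝ) < y := hy
  have e : a*x + b*y - 1 = a*(x-1) + b*(y-1) := by linear_combination hab
  have hQ1 : (1:ℝ) < a*x + b*y := by
    have h1 := mul_pos ha' (sub_pos.2 hx1)
    have h2 := mul_pos hb' (sub_pos.2 hy1)
    linarith
  rw [AuxP.taufun_eq hx1, AuxP.taufun_eq hy1, AuxP.taufun_eq hQ1]
  set Mx := min (sSup (AuxP.Sset d m T p x)) (d:ℝ) with hMxdef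
  set My := min (sSup (AuxP.Sset d m T p y)) (d:ℝ) with hMydef
  set MQ := min (sSup (AuxP.Sset d m T p (a*x+b*y))) (d:ℝ) with hMQdef
  have hQne : a*x + b*y - 1 ≠ 0 := by linarith
  have key : ∀ ε, 0 < ε →
      a * ((x - 1) * Mx) + b * ((y - 1) * My) ≤ (a*x + b*y - 1) * MQ + ε := by
    intro ε hε
    set ε' := ε / (a*x + b*y - 1) with hε'def
    have hε'0 : 0 < ε' := div_pos hε (by linarith)
    obtain ⟨s₁, hs₁mem, hs₁d, hs₁ge⟩ := AuxP.approx hd hm hTinv hTn hp hp1 hx1 hε'0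
    obtain ⟨s₂, hs₂mem, hs₂d, hs₂ge⟩ := AuxP.approx hd hm hTinv hTn hp hp1 hy1 hε'0
    have hsmem := AuxP.mem_convex hd hm hTinv hTn hp hx1 hy1 ha' hb' hab
      hs₁mem hs₂mem hs₁d hs₂d
    have hw1 : 0 ≤ a*(x-1)/(a*x+b*y-1) :=
      div_nonneg (mul_nonneg ha'.le (by linarith)) (by linarith)
    have hw2 : 0 ≤ b*(y-1)/(a*x+b*y-1) :=
      div_nonneg (mul_nonneg hb'.le (by linarith)) (by linarith)
    have hw12 : a*(x-1)/(a*x+b*y-1) + b*(y-1)/(a*x+b*y-1) = 1 := by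
      rw [← add_div, ← e, div_self hQne]
    have hle1 : a*(x-1)/(a*x+b*y-1) * s₁ + b*(y-1)/(a*x+b*y-1) * s₂
        ≤ sSup (AuxP.Sset d m T p (a*x+b*y)) :=
      le_csSup (AuxP.bdd_above hd hm hTinv hTn hp hp1 hQ1) hsmem
    have hled : a*(x-1)/(a*x+b*y-1) * s₁ + b*(y-1)/(a*x+b*y-1) * s₂ ≤ (d:ℝ) := by
      have h1 : a*(x-1)/(a*x+b*y-1) * s₁ ≤ a*(x-1)/(a*x+b*y-1) * (d:ℝ) :=
        mul_le_mul_of_nonneg_left hs₁d hw1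
      have h2 : b*(y-1)/(a*x+b*y-1) * s₂ ≤ b*(y-1)/(a*x+b*y-1) * (d:ℝ) :=
        mul_le_mul_of_nonneg_left hs₂d hw2
      have h3 : a*(x-1)/(a*x+b*y-1) * (d:ℝ) + b*(y-1)/(a*x+b*y-1) * (d:ℝ) = (d:ℝ) := by
        linear_combination (d:ℝ) * hw12
      linarith
    have hMQge : a*(x-1)/(a*x+b*y-1) * s₁ + b*(y-1)/(a*x+b*y-1) * s₂ ≤ MQ :=
      le_min hle1 hled
    have t1 : a*(x-1)*Mx ≤ a*(x-1)*(s₁ + ε') :=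
      mul_le_mul_of_nonneg_left (by
        have := min_le_left (sSup (AuxP.Sset d m T p x)) (d:ℝ)
        linarith [hs₁ge]) (mul_nonneg ha'.le (by linarith))
    have t2 : b*(y-1)*My ≤ b*(y-1)*(s₂ + ε') :=
      mul_le_mul_of_nonneg_left (by linarith [hs₂ge]) (mul_nonneg hb'.le (by linarith))
    have t4 : (a*x+b*y-1) * (a*(x-1)/(a*x+b*y-1) * s₁ + b*(y-1)/(a*x+b*y-1) * s₂)
        ≤ (a*x+b*y-1) * MQ :=
      mul_le_mul_of_nonneg_left hMQge (by linarith)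
    have hcanc : (a*x+b*y-1) * (a*(x-1)/(a*x+b*y-1) * s₁ + b*(y-1)/(a*x+b*y-1) * s₂)
        = a*(x-1)*s₁ + b*(y-1)*s₂ := by
      field_simp
    have hεe : (a*x+b*y-1) * ε' = ε := by
      rw [hε'def, mul_comm, div_mul_cancel₀ ε hQne]
    have r1 : a*(x-1)*(s₁+ε') = a*(x-1)*s₁ + a*(x-1)*ε' := by ring
    have r2 : b*(y-1)*(s₂+ε') = b*(y-1)*s₂ + b*(y-1)*ε' := by ring
    have r3 : a*(x-1)*ε' + b*(y-1)*ε' = (a*x+b*y-1)*ε' := by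
      rw [e]; ring
    have hgoal1 : a * ((x - 1) * Mx) = a*(x-1)*Mx := by ring
    have hgoal2 : b * ((y - 1) * My) = b*(y-1)*My := by ring
    rw [hgoal1, hgoal2]
    linarith [t1, t2, t4, hcanc, hεe, r1, r2, r3]
  by_contra hcon
  push_neg at hcon
  have hkey := key ((a * ((x - 1) * Mx) + b * ((y - 1) * My) - (a*x + b*y - 1) * MQ) / 2)
    (by linarith)
  linarith
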